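/- For a gap-free law L in a game (A, Δ, P), a law L' is a gap-free reduction of L if and only if at least one of the following is true: (1) L is a vertex cover of the hypergraph (⋃Δ, S(P)) and L' is a vertex cover of the induced subgraph (L, S(P)^L); (2) there is an agent a ∈ A and a safable action d ∈ Δ_a^L such that L is a vertex cover of the hypergraph H^{a,d} and L' is a vertex cover of the induced subgraph (L, (E^{a,d})^L), where E^{a,d} is the edge set of H^{a,d}; (3) there is an agent a ∈ A and a safable action d ∈ Δ_a ∩ L such that L \ {d} is a vertex cover of the hypergraph H^{a,d} and L' is a vertex cover of the induced subgraph (L \ {d}, (E^{a,d})^{L \ {d}}). -/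

import Mathlib

/-!
A law `L'` is gap-free exactly when either it meets the support of every prohibited profile, or
some agent `a` has an action `d ∉ L'` that `L'` makes safe, i.e. `L'` meets the support of every
prohibited profile in which `a` plays `d` (and then `d` is safable, witnessed by `L'` itself).
Both are covering conditions on `L'`, and for `L' ⊆ C` a cover of the edges is the same as a
cover of their traces on `C`, which in turn makes `C` a cover. The three cases of the theorem
are the first alternative and the second one split by whether `d ∈ L`, where `L' ⊆ L` with
`d ∉ L'` means `L' ⊆ L \ {d}`.
-/

namespace MAS

variable {A α : Type*}

/-- The set of profiles of an action family `Δ`: functions assigning to each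
agent `a` an action in `Δ a`. -/
def Profiles (Δ : A → Set α) : Set (A → α) := {δ | ∀ a, δ a ∈ Δ a}

/-- The support set `S(δ)` of a profile `δ`. -/
def supp (δ : A → α) : Set α := Set.range δ

/-- A law in the game: a set of actions `L ⊆ ⋃ a, Δ a`. -/
def IsLaw (Δ : A → Set α) (L : Set α) : Prop := L ⊆ ⋃ a, Δ a

/-- The law-imposed action sets `Δ_a^L = Δ_a \ L`. -/
def lawActions (Δ : A → Set α) (L : Set α) : A → Set α := fun a => Δ a \ L

/-- The law-imposed prohibition `P^L = P ∩ ∏ Δ^L`. -/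
def lawProhib (Δ : A → Set α) (P : Set (A → α)) (L : Set α) : Set (A → α) :=
  P ∩ Profiles (lawActions Δ L)

/-- A law `L` is useful if `P^L = ∅` in the law-imposed game. -/
def Useful (Δ : A → Set α) (P : Set (A → α)) (L : Set α) : Prop :=
  lawProhib Δ P L = ∅

/-- An action `d` is a safe action of agent `a` in the game `(A, Δ, P)` if
`d ∈ Δ a` and `δ a ≠ d` for every prohibited profile `δ ∈ P`. -/
def SafeAction (Δ : A → Set α) (P : Set (A → α)) (a : A) (d : α) : Prop :=
  d ∈ Δ a ∧ ∀ δ ∈ P, δ a ≠ d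

/-- In a prohibited profile `δ ∈ P`, agent `a` is responsible under law `L` if
`δ a ∈ L` (legally), or `S(δ) ∩ L = ∅` and a safe action of agent `a` exists in
the law-imposed game (counterfactually). -/
def Responsible (Δ : A → Set α) (P : Set (A → α)) (L : Set α) (δ : A → α) (a : A) : Prop :=
  δ a ∈ L ∨ (supp δ ∩ L = ∅ ∧ ∃ d, SafeAction (lawActions Δ L) (lawProhib Δ P L) a d)

/-- A law `L` is gap-free if in each prohibited profile there is at least one
responsible agent. -/
def GapFree (Δ : A → Set α) (P : Set (A → α)) (L : Set α) : Prop :=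
  ∀ δ ∈ P, ∃ a, Responsible Δ P L δ a

/-- An action `d` is safable if there is a law `L` and an agent `a` such that
`d` is a safe action of agent `a` in the law-imposed game. -/
def Safable (Δ : A → Set α) (P : Set (A → α)) (d : α) : Prop :=
  ∃ L, IsLaw Δ L ∧ ∃ a, SafeAction (lawActions Δ L) (lawProhib Δ P L) a d

/-- `C` is a vertex cover of the hypergraph `(V, E)`. -/
def IsVC (V : Set α) (E : Set (Set α)) (C : Set α) : Prop :=
  C ⊆ V ∧ ∀ e ∈ E, (C ∩ e).Nonempty

/-- A minimal vertex cover. -/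
def MinimalVC (V : Set α) (E : Set (Set α)) (C : Set α) : Prop :=
  IsVC V E C ∧ ∀ C', C' ⊂ C → ¬ IsVC V E C'

/-- A minimal gap-free law: a gap-free law no strict subset of which is gap-free. -/
def MinimalGapFree (Δ : A → Set α) (P : Set (A → α)) (L : Set α) : Prop :=
  GapFree Δ P L ∧ ∀ L', L' ⊂ L → ¬ GapFree Δ P L'

/-- `S(P) = {S(δ) : δ ∈ P}`. -/
def suppSet (P : Set (A → α)) : Set (Set α) := (fun δ => supp δ) '' P

/-- The edge set `E^C = {C ∩ e : e ∈ E}` of the induced subgraph. -/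
def inducedEdges (E : Set (Set α)) (C : Set α) : Set (Set α) := (fun e => C ∩ e) '' E

/-- The vertex set `(⋃ Δ) \ {d}` of the hypergraph `H^{a,d}`. -/
def Hvertices (Δ : A → Set α) (d : α) : Set α := (⋃ a, Δ a) \ {d}

/-- The edge set `{S(δ) \ {d} : δ ∈ P, δ a = d}` of the hypergraph `H^{a,d}`. -/
def Hedges (P : Set (A → α)) (a : A) (d : α) : Set (Set α) :=
  (fun δ => supp δ \ {d}) '' {δ ∈ P | δ a = d}


def IsTransversal (E : Set (Set α)) (C : Set α) : Prop :=
  ∀ e ∈ E, (C ∩ e).Nonempty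

section Hypergraph

variable {V C C' : Set α} {E : Set (Set α)}

theorem IsTransversal.mono (h : IsTransversal E C') (hC : C' ⊆ C) : IsTransversal E C :=
  fun e he => (h e he).mono (Set.inter_subset_inter_left e hC)

theorem isVC_iff : IsVC V E C ↔ C ⊆ V ∧ IsTransversal E C := Iff.rfl

theorem isTransversal_inducedEdges_iff (h : C' ⊆ C) :
    IsTransversal (inducedEdges E C) C' ↔ IsTransversal E C' := by
  simp only [IsTransversal, inducedEdges, Set.forall_mem_image, ← Set.inter_assoc,
    Set.inter_eq_left.2 h]

theorem isVC_inducedEdges_iff :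
    IsVC C (inducedEdges E C) C' ↔ C' ⊆ C ∧ IsTransversal E C' := by
  rw [isVC_iff, and_congr_right_iff]
  exact isTransversal_inducedEdges_iff

theorem isVC_and_isVC_inducedEdges_iff (hCV : C ⊆ V) :
    IsVC V E C ∧ IsVC C (inducedEdges E C) C' ↔ C' ⊆ C ∧ IsTransversal E C' := by
  rw [isVC_inducedEdges_iff]
  exact ⟨And.right, fun h => ⟨⟨hCV, h.2.mono h.1⟩, h⟩⟩

end Hypergraph

section Game

variable {Δ : A → Set α} {P : Set (A → α)} {M : Set α}

theorem inter_supp_nonempty_iff {δ : A → α} : (M ∩ supp δ).Nonempty ↔ ∃ b, δ b ∈ M := by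
  simp [supp, Set.Nonempty]

theorem isTransversal_hedges_iff {a : A} {d : α} (hd : d ∉ M) :
    IsTransversal (Hedges P a d) M ↔ ∀ δ ∈ P, δ a = d → (M ∩ supp δ).Nonempty := by
  have hM : ∀ δ : A → α, (M ∩ supp δ) \ {d} = M ∩ supp δ := fun δ =>
    Set.sdiff_singleton_eq_self fun h => hd h.1
  simp only [IsTransversal, Hedges, Set.forall_mem_image, Set.mem_ofPred_eq, and_imp,
    ← Set.inter_sdiff_assoc, hM]

theorem mem_lawProhib_iff (hP : P ⊆ Profiles Δ) {δ : A → α} :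
    δ ∈ lawProhib Δ P M ↔ δ ∈ P ∧ ¬ (M ∩ supp δ).Nonempty := by
  rw [inter_supp_nonempty_iff, not_exists]
  exact ⟨fun h => ⟨h.1, fun b => (h.2 b).2⟩, fun h => ⟨h.1, fun b => ⟨hP h.1 b, h.2 b⟩⟩⟩

theorem safeAction_lawActions_iff (hP : P ⊆ Profiles Δ) {a : A} {d : α} :
    SafeAction (lawActions Δ M) (lawProhib Δ P M) a d ↔
      d ∈ Δ a ∧ d ∉ M ∧ IsTransversal (Hedges P a d) M := by
  simp only [SafeAction, lawActions, Set.mem_sdiff, mem_lawProhib_iff hP, and_imp, and_assoc]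
  refine and_congr_right fun _ => and_congr_right fun hd => ?_
  rw [isTransversal_hedges_iff hd]
  exact forall₂_congr fun δ _ => by tauto

/-- The counterfactual clause of responsibility does not depend on the profile, so it can be
pulled out of the quantifier over prohibited profiles. -/
theorem gapFree_iff :
    GapFree Δ P M ↔
      IsTransversal (suppSet P) M ∨ ∃ a d, SafeAction (lawActions Δ M) (lawProhib Δ P M) a d := by
  simp only [IsTransversal, suppSet, Set.forall_mem_image]
  constructor
  · intro h
    refine or_iff_not_imp_left.2 fun hcov => ?_
    obtain ⟨δ, hδ, hδM⟩ := not_forall₂.1 hcov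
    obtain ⟨a, ha | ⟨-, d, hd⟩⟩ := h δ hδ
    · exact absurd (inter_supp_nonempty_iff.2 ⟨a, ha⟩) hδM
    · exact ⟨a, d, hd⟩
  · rintro (hcov | ⟨a, d, hd⟩) δ hδ
    · obtain ⟨b, hb⟩ := inter_supp_nonempty_iff.1 (hcov hδ)
      exact ⟨b, Or.inl hb⟩
    · by_cases hδM : (M ∩ supp δ).Nonempty
      · obtain ⟨b, hb⟩ := inter_supp_nonempty_iff.1 hδM
        exact ⟨b, Or.inl hb⟩
      · rw [Set.inter_comm, Set.not_nonempty_iff_eq_empty] at hδM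
        exact ⟨a, Or.inr ⟨hδM, d, hd⟩⟩

end Game

theorem gapFreeReduction_iff_isVC_general {A α : Type*}
    (Δ : A → Set α) (P : Set (A → α))
    (hP : P ⊆ Profiles Δ)
    (L : Set α) (hL : IsLaw Δ L)
    (L' : Set α) (hL' : IsLaw Δ L') :
    (L' ⊆ L ∧ GapFree Δ P L') ↔
      ((IsVC (⋃ a, Δ a) (suppSet P) L ∧
          IsVC L (inducedEdges (suppSet P) L) L') ∨
        (∃ a, ∃ d ∈ lawActions Δ L a, Safable Δ P d ∧
          IsVC (Hvertices Δ d) (Hedges P a d) L ∧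
            IsVC L (inducedEdges (Hedges P a d) L) L') ∨
        (∃ a, ∃ d ∈ Δ a ∩ L, Safable Δ P d ∧
          IsVC (Hvertices Δ d) (Hedges P a d) (L \ {d}) ∧
            IsVC (L \ {d}) (inducedEdges (Hedges P a d) (L \ {d})) L')) := by
  simp only [gapFree_iff, safeAction_lawActions_iff hP]
  constructor
  · rintro ⟨hsub, hcov | ⟨a, d, hdΔ, hdL', hcov⟩⟩
    · exact Or.inl ((isVC_and_isVC_inducedEdges_iff hL).2 ⟨hsub, hcov⟩)
    have hsafable : Safable Δ P d :=
      ⟨L', hL', a, (safeAction_lawActions_iff hP).2 ⟨hdΔ, hdL', hcov⟩⟩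
    by_cases hdL : d ∈ L
    · refine Or.inr (Or.inr ⟨a, d, ⟨hdΔ, hdL⟩, hsafable, ?_⟩)
      exact (isVC_and_isVC_inducedEdges_iff (Set.sdiff_subset_sdiff_left hL)).2
        ⟨Set.subset_sdiff_singleton hsub hdL', hcov⟩
    · refine Or.inr (Or.inl ⟨a, d, ⟨hdΔ, hdL⟩, hsafable, ?_⟩)
      exact (isVC_and_isVC_inducedEdges_iff (Set.subset_sdiff_singleton hL hdL)).2 ⟨hsub, hcov⟩
  · rintro (⟨-, hVC⟩ | ⟨a, d, ⟨hdΔ, hdL⟩, -, -, hVC⟩ | ⟨a, d, ⟨hdΔ, -⟩, -, -, hVC⟩) <;>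
      obtain ⟨hsub, hcov⟩ := isVC_inducedEdges_iff.1 hVC
    · exact ⟨hsub, Or.inl hcov⟩
    · exact ⟨hsub, Or.inr ⟨a, d, hdΔ, fun h => hdL (hsub h), hcov⟩⟩
    · exact ⟨fun x hx => (hsub hx).1, Or.inr ⟨a, d, hdΔ, fun h => (hsub h).2 rfl, hcov⟩⟩

/-- For a gap-free law `L` in a game `(A, Δ, P)`, a law `L'` is a
gap-free reduction of `L` if and only if (1) `L` is a vertex cover of
`(⋃Δ, S(P))` and `L'` is a vertex cover of the induced subgraph `(L, S(P)^L)`;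
or (2) there is an agent `a ∈ A` and a safable action `d ∈ Δ_a^L` such that `L`
is a vertex cover of `H^{a,d}` and `L'` is a vertex cover of the induced
subgraph `(L, (E^{a,d})^L)`; or (3) there is an agent `a ∈ A` and a safable
action `d ∈ Δ_a ∩ L` such that `L \ {d}` is a vertex cover of `H^{a,d}` and
`L'` is a vertex cover of the induced subgraph `(L \ {d}, (E^{a,d})^{L \ {d}})`. -/
theorem gapFreeReduction_iff_isVC {A α : Type*} [Fintype A] [Nonempty A]
    (Δ : A → Set α) (P : Set (A → α))
    (hΔfin : ∀ a, (Δ a).Finite) (hP : P ⊆ Profiles Δ)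
    (L : Set α) (hL : IsLaw Δ L) (hgf : GapFree Δ P L)
    (L' : Set α) (hL' : IsLaw Δ L') :
    (L' ⊆ L ∧ GapFree Δ P L') ↔
      ((IsVC (⋃ a, Δ a) (suppSet P) L ∧
          IsVC L (inducedEdges (suppSet P) L) L') ∨
        (∃ a, ∃ d ∈ lawActions Δ L a, Safable Δ P d ∧
          IsVC (Hvertices Δ d) (Hedges P a d) L ∧
            IsVC L (inducedEdges (Hedges P a d) L) L') ∨
        (∃ a, ∃ d ∈ Δ a ∩ L, Safable Δ P d ∧
          IsVC (Hvertices Δ d) (Hedges P a d) (L \ {d}) ∧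
            IsVC (L \ {d}) (inducedEdges (Hedges P a d) (L \ {d})) L')) :=
  gapFreeReduction_iff_isVC_general Δ P hP L hL L' hL'

end MAS
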